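/- Let 𝒢 = (G_n, φ_n)_{n ∈ ℤ} be a rigid biinfinite inverse sequence of groups, with F_n := im(φ_1 ∘ … ∘ φ_n). Then the sequence (F_n) stabilizes if and only if the one-sided inverse sequence G_0 ← G_1 ← G_2 ← … (with bonding maps φ_n) has the Mittag–Leffler property. -/
import Mathlib


variable {G : ℤ → Type*} [∀ n, Group (G n)]

/-- Transport a group along an equality of indices. -/
def castHom {G : ℤ → Type*} [∀ n, Group (G n)] {a b : ℤ} (h : a = b) : G a →* G b := by
  subst h; exact MonoidHom.id _

/-- The composite bonding homomorphism `G (n + m) →* G n` of the inverse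
sequence with bonding maps `φ k : G (k+1) →* G k`. -/
def chain (φ : ∀ n : ℤ, G (n + 1) →* G n) (n : ℤ) : (m : ℕ) → G (n + m) →* G n
  | 0 => castHom (by simp)
  | (m + 1) => (chain φ n m).comp ((φ (n + m)).comp (castHom (by push_cast; ring)))

/-- `F n` is the image of `G n` in `G 0` under the composite bonding map. -/
def F (φ : ∀ n : ℤ, G (n + 1) →* G n) (n : ℕ) : Subgroup (G 0) :=
  (chain φ 0 n).range

/-- Rigidity of a biinfinite inverse sequence of groups: for every `m ≥ 1` and every `n ∈ ℤ`,
the segment `G 0 ← G 1 ← ⋯ ← G m` is isomorphic, via vertical isomorphisms commuting with the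
bonding maps, to the segment `G n ← G (n+1) ← ⋯ ← G (n+m)`. -/
def Rigid (φ : ∀ n : ℤ, G (n + 1) →* G n) : Prop :=
  ∀ m : ℕ, 1 ≤ m → ∀ n : ℤ,
    ∃ ψ : ∀ k : ℕ, k ≤ m → (G (k : ℤ) ≃* G (n + (k : ℤ))),
      ∀ (k : ℕ) (hk : k + 1 ≤ m) (x : G ((k : ℤ) + 1)),
        ψ k (Nat.le_of_succ_le hk) (φ (k : ℤ) x) =
          φ (n + (k : ℤ))
            (castHom (by push_cast; ring)
              (ψ (k + 1) hk (castHom (by push_cast; ring) x)))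

/-- The Mittag–Leffler property of the one-sided inverse sequence `G 0 ← G 1 ← G 2 ← ⋯`:
for every `m` there is an `N ≥ m` such that for all `n ≥ N` the image of `G n` in `G m`
equals the image of `G N` in `G m`. -/
def MittagLeffler (φ : ∀ n : ℤ, G (n + 1) →* G n) : Prop :=
  ∀ m : ℕ, ∃ N : ℕ, m ≤ N ∧ ∀ n : ℕ, N ≤ n →
    (chain φ (m : ℤ) (N - m)).range = (chain φ (m : ℤ) (n - m)).range

lemma castHom_castHom {a b c : ℤ} (h1 : a = b) (h2 : b = c) (x : G a) :
    castHom (G := G) h2 (castHom h1 x) = castHom (h1.trans h2) x := by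
  subst h1; subst h2; rfl

lemma castHom_self {a : ℤ} (h : a = a) (x : G a) : castHom (G := G) h x = x := rfl

lemma phi_cast (φ : ∀ n : ℤ, G (n + 1) →* G n) {a b : ℤ} (h : a = b) (h' : a + 1 = b + 1)
    (x : G (a + 1)) : castHom h (φ a x) = φ b (castHom h' x) := by
  subst h; rfl

def castEquiv {G : ℤ → Type*} [∀ n, Group (G n)] {a b : ℤ} (h : a = b) : G a ≃* G b := by
  subst h; exact MulEquiv.refl _

lemma castEquiv_apply {a b : ℤ} (h : a = b) (x : G a) :
    castEquiv (G := G) h x = castHom h x := by subst h; rfl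

lemma chain_succ (φ : ∀ n : ℤ, G (n + 1) →* G n) (n : ℤ) (m : ℕ) (h : n + ((m:ℤ)+1) = n + (m:ℤ) + 1) (x : G (n + ((m+1:ℕ):ℤ))) :
    chain φ n (m+1) x = chain φ n m (φ (n + (m:ℤ)) (castHom h x)) := rfl

lemma chain_split (φ : ∀ n : ℤ, G (n + 1) →* G n) (j : ℤ) (a : ℕ) :
    ∀ (b : ℕ) (h : j + ((a+b:ℕ):ℤ) = (j + (a:ℤ)) + (b:ℤ)) (x : G (j + ((a+b:ℕ):ℤ))),
    chain φ j (a+b) x = chain φ j a (chain φ (j + (a:ℤ)) b (castHom h x))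
  | 0, h, x => by
      show chain φ j a x = chain φ j a (castHom _ (castHom h x))
      exact congrArg (chain φ j a) ((castHom_castHom h _ x).trans (castHom_self _ x)).symm
  | (b+1), h, x => by
      have c1 : j + ((a+(b+1):ℕ):ℤ) = j + ((a+b:ℕ):ℤ) + 1 := by push_cast; ring
      have c2 : j + ((a+b:ℕ):ℤ) = j + (a:ℤ) + (b:ℤ) := by push_cast; ring
      have c2' : j + ((a+b:ℕ):ℤ) + 1 = j + (a:ℤ) + (b:ℤ) + 1 := by rw [c2]
      calc chain φ j (a+(b+1)) x
          = chain φ j (a+b) (φ (j + ((a+b:ℕ):ℤ)) (castHom c1 x)) := rfl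
        _ = chain φ j a (chain φ (j + (a:ℤ)) b (castHom c2 (φ (j + ((a+b:ℕ):ℤ)) (castHom c1 x)))) :=
            chain_split φ j a b c2 _
        _ = chain φ j a (chain φ (j + (a:ℤ)) b (φ (j + (a:ℤ) + (b:ℤ)) (castHom c2' (castHom c1 x)))) := by
            rw [phi_cast φ c2 c2']
        _ = chain φ j a (chain φ (j + (a:ℤ)) b (φ (j + (a:ℤ) + (b:ℤ)) (castHom (c1.trans c2') x))) := by
            rw [castHom_castHom]
        _ = chain φ j a (chain φ (j + (a:ℤ)) (b+1) (castHom h x)) := by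
            show _ = chain φ j a (chain φ (j + (a:ℤ)) b (φ (j + (a:ℤ) + (b:ℤ)) (castHom _ (castHom h x))))
            rw [castHom_castHom]

/-- `Rg φ j k` is the image of `G (j+k)` in `G j`. -/
def Rg (φ : ∀ n : ℤ, G (n + 1) →* G n) (j : ℤ) (k : ℕ) : Subgroup (G j) :=
  (chain φ j k).range

lemma Rg_succ_le (φ : ∀ n : ℤ, G (n + 1) →* G n) (j : ℤ) (k : ℕ) :
    Rg φ j (k+1) ≤ Rg φ j k := by
  rintro y ⟨x, rfl⟩
  exact ⟨(φ (j + (k:ℤ))) (castHom (by push_cast; ring) x), rfl⟩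

lemma Rg_antitone (φ : ∀ n : ℤ, G (n + 1) →* G n) (j : ℤ) {a b : ℕ} (hab : a ≤ b) :
    Rg φ j b ≤ Rg φ j a := by
  induction b with
  | zero => simp_all
  | succ b ih =>
      rcases Nat.lt_or_ge a (b+1) with hlt | hge
      · exact le_trans (Rg_succ_le φ j b) (ih (by omega))
      · have : a = b + 1 := le_antisymm hab hge
        subst this; exact le_refl _

lemma Rg_one_add (φ : ∀ n : ℤ, G (n + 1) →* G n) (j : ℤ) (s : ℕ) :
    Rg φ j (1 + s) = (Rg φ (j+1) s).map (chain φ j 1) := by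
  have h : j + ((1+s:ℕ):ℤ) = (j + ((1:ℕ):ℤ)) + (s:ℤ) := by push_cast; ring
  ext y
  constructor
  · rintro ⟨x, rfl⟩
    exact ⟨chain φ (j + ((1:ℕ):ℤ)) s (castHom h x), ⟨_, rfl⟩, (chain_split φ j 1 s h x).symm⟩
  · rintro ⟨z, ⟨w, rfl⟩, rfl⟩
    refine ⟨castHom h.symm w, ?_⟩
    rw [chain_split φ j 1 s h, castHom_castHom, castHom_self]
    rfl

lemma rigid_commute (φ : ∀ n : ℤ, G (n + 1) →* G n) {m : ℕ} {j : ℤ}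
    (ψ : ∀ k : ℕ, k ≤ m → (G (k : ℤ) ≃* G (j + (k : ℤ))))
    (hψ : ∀ (k : ℕ) (hk : k + 1 ≤ m) (x : G ((k : ℤ) + 1)),
        ψ k (Nat.le_of_succ_le hk) (φ (k : ℤ) x) =
          φ (j + (k : ℤ))
            (castHom (by push_cast; ring) (ψ (k + 1) hk (castHom (by push_cast; ring) x)))) :
    ∀ (k : ℕ) (hk : k ≤ m) (x : G (k:ℤ)) (h : (k:ℤ) = 0 + (k:ℤ)),
      castHom (show j + ((0:ℕ):ℤ) = j by simp)
          (ψ 0 (Nat.zero_le m) (chain φ 0 k (castHom h x)))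
        = chain φ j k (ψ k hk x)
  | 0, hk, x, h => by
      have e1 : (castHom (show (0:ℤ) + ((0:ℕ):ℤ) = 0 by simp) (castHom h x) : G ((0:ℕ):ℤ)) = x :=
        (castHom_castHom h _ x).trans (castHom_self _ x)
      calc castHom (show j + ((0:ℕ):ℤ) = j by simp) (ψ 0 (Nat.zero_le m) (chain φ 0 0 (castHom h x)))
          = castHom (show j + ((0:ℕ):ℤ) = j by simp) (ψ 0 (Nat.zero_le m) x) := by rw [show chain φ 0 0 (castHom h x) = x from e1]
        _ = chain φ j 0 (ψ 0 hk x) := rfl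
  | (k+1), hk, x, h => by
      have hk' : k ≤ m := Nat.le_of_succ_le hk
      have h₃ : (k:ℤ) = 0 + (k:ℤ) := by ring
      have h₃' : (k:ℤ) + 1 = 0 + (k:ℤ) + 1 := by rw [← h₃]
      have q2 : ((k+1:ℕ):ℤ) = (k:ℤ) + 1 := by push_cast; ring
      have c1 : (0:ℤ) + ((k+1:ℕ):ℤ) = 0 + (k:ℤ) + 1 := by push_cast; ring
      have w2 : (k:ℤ) + 1 = ((k+1:ℕ):ℤ) := by push_cast; ring
      have w1 : j + ((k+1:ℕ):ℤ) = j + (k:ℤ) + 1 := by push_cast; ring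
      calc castHom (show j + ((0:ℕ):ℤ) = j by simp)
              (ψ 0 (Nat.zero_le m) (chain φ 0 (k+1) (castHom h x)))
          = castHom (show j + ((0:ℕ):ℤ) = j by simp)
              (ψ 0 (Nat.zero_le m) (chain φ 0 k (φ (0 + (k:ℤ)) (castHom c1 (castHom h x))))) := rfl
        _ = castHom (show j + ((0:ℕ):ℤ) = j by simp)
              (ψ 0 (Nat.zero_le m) (chain φ 0 k (φ (0 + (k:ℤ)) (castHom h₃' (castHom q2 x))))) := by
            rw [castHom_castHom, castHom_castHom]
        _ = castHom (show j + ((0:ℕ):ℤ) = j by simp)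
              (ψ 0 (Nat.zero_le m) (chain φ 0 k (castHom h₃ (φ (k:ℤ) (castHom q2 x))))) := by
            rw [phi_cast φ h₃ h₃']
        _ = chain φ j k (ψ k hk' (φ (k:ℤ) (castHom q2 x))) :=
            rigid_commute φ ψ hψ k hk' _ h₃
        _ = chain φ j k (φ (j + (k:ℤ))
              (castHom (by push_cast; ring) (ψ (k+1) hk (castHom w2 (castHom q2 x))))) := by
            rw [hψ k hk (castHom q2 x)]
        _ = chain φ j k (φ (j + (k:ℤ))
              (castHom (by push_cast; ring) (ψ (k+1) hk x))) := by
            rw [castHom_castHom, castHom_self]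
        _ = chain φ j (k+1) (ψ (k+1) hk x) := rfl

lemma Rg_transport (φ : ∀ n : ℤ, G (n + 1) →* G n) (hrigid : Rigid φ) (j : ℤ)
    {a b : ℕ} (hab : Rg φ 0 a = Rg φ 0 b) : Rg φ j a = Rg φ j b := by
  set m : ℕ := max a b + 1 with hm
  obtain ⟨ψ, hψ⟩ := hrigid m (by omega) j
  have key : ∀ (k : ℕ) (hk : k ≤ m),
      Rg φ j k = (Rg φ 0 k).map ((castHom (show j + ((0:ℕ):ℤ) = j by simp)).comp
        (ψ 0 (Nat.zero_le m)).toMonoidHom) := by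
    intro k hk
    ext y
    constructor
    · rintro ⟨w, rfl⟩
      refine ⟨chain φ 0 k (castHom (by ring) ((ψ k hk).symm w)), ⟨_, rfl⟩, ?_⟩
      have := rigid_commute φ ψ hψ k hk ((ψ k hk).symm w) (by ring)
      simp only [MonoidHom.coe_comp, MulEquiv.coe_toMonoidHom, Function.comp_apply]
      rw [this, MulEquiv.apply_symm_apply]
    · rintro ⟨z, ⟨w, rfl⟩, rfl⟩
      have e1 : chain φ 0 k w
          = chain φ 0 k (castHom (show (k:ℤ) = 0 + (k:ℤ) by ring) (castHom (by ring) w)) := by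
        rw [castHom_castHom, castHom_self]
      simp only [MonoidHom.coe_comp, MulEquiv.coe_toMonoidHom, Function.comp_apply]
      rw [e1, rigid_commute φ ψ hψ k hk (castHom (by ring) w) (by ring)]
      exact ⟨_, rfl⟩
  rw [key a (by omega), key b (by omega), hab]


theorem stabilizes_iff_mittagLeffler (φ : ∀ n : ℤ, G (n + 1) →* G n)
    (hrigid : Rigid φ) :
    (∃ n : ℕ, F φ n = F φ (n + 1)) ↔ MittagLeffler φ := by
  constructor
  · rintro ⟨n₀, hn₀⟩
    have hbase : Rg φ 0 n₀ = Rg φ 0 (n₀+1) := hn₀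
    have C : ∀ (t : ℕ) (j : ℤ), Rg φ j (n₀+t) = Rg φ j (n₀+t+1) := by
      intro t
      induction t with
      | zero => intro j; exact Rg_transport φ hrigid j hbase
      | succ t ih =>
          intro j
          have e1 : n₀ + (t+1) = 1 + (n₀ + t) := by omega
          have e2 : 1 + (n₀ + t) + 1 = 1 + (n₀ + t + 1) := by omega
          rw [e1, e2, Rg_one_add, Rg_one_add, ih (j+1)]
    have Fconst : ∀ t : ℕ, Rg φ 0 (n₀ + t) = Rg φ 0 n₀ := by
      intro t
      induction t with
      | zero => rfl
      | succ t ih =>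
          have : n₀ + (t+1) = n₀ + t + 1 := by omega
          rw [this, ← C t 0, ih]
    intro m
    refine ⟨n₀ + m, by omega, ?_⟩
    intro n hn
    show Rg φ (m:ℤ) (n₀ + m - m) = Rg φ (m:ℤ) (n - m)
    have e1 : n₀ + m - m = n₀ := by omega
    have e2 : n - m = n₀ + (n - m - n₀) := by omega
    rw [e1, e2]
    exact Rg_transport φ hrigid (m:ℤ) (Fconst _).symm
  · intro hML
    obtain ⟨N, _, hs⟩ := hML 0
    exact ⟨N, hs (N+1) (by omega)⟩
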